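/- For the second Ding–Helleseth sequence, every a ∈ Q satisfies S(ξ_N^a) = −(q+1)/2. -/

import Mathlib

open Finset

/-- `ξ_N = exp(2πi/N)`, a primitive `N`-th root of unity. -/
noncomputable def DHxi (N : ℕ) : ℂ := Complex.exp (2 * Real.pi * Complex.I / N)

/-- Gauss period: `Σ_{a ∈ D} ξ_N^a`. -/
noncomputable def DHeta (N : ℕ) (D : Finset (ZMod N)) : ℂ := ∑ a ∈ D, DHxi N ^ a.val

/-- Ding–Helleseth generalized cyclotomic class
`D₀ = {g^(2t) x^i : 0 ≤ t ≤ e/2 - 1, i ∈ {0,1}}` in `ZMod (p*q)`, where `e = (p-1)(q-1)/2`. -/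
def DHD0 (p q g x : ℕ) : Finset (ZMod (p * q)) :=
  (Finset.range ((p - 1) * (q - 1) / 4) ×ˢ Finset.range 2).image
    (fun ti => (g : ZMod (p * q)) ^ (2 * ti.1) * (x : ZMod (p * q)) ^ ti.2)

/-- `D₁ = g · D₀`. -/
def DHD1 (p q g x : ℕ) : Finset (ZMod (p * q)) :=
  (DHD0 p q g x).image (fun d => (g : ZMod (p * q)) * d)

/-- `P = {p, 2p, …, (q-1)p}` as a subset of `ZMod (p*q)`. -/
def DHP (p q : ℕ) : Finset (ZMod (p * q)) :=
  (Finset.Icc 1 (q - 1)).image (fun k => ((k * p : ℕ) : ZMod (p * q)))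

/-- `Q = {q, 2q, …, (p-1)q}` as a subset of `ZMod (p*q)`. -/
def DHQ (p q : ℕ) : Finset (ZMod (p * q)) :=
  (Finset.Icc 1 (p - 1)).image (fun k => ((k * q : ℕ) : ZMod (p * q)))

/-- First Ding–Helleseth sequence: `s_i = 1` iff `i mod N ∈ D₁ ∪ P`. -/
def DHs1 (p q g x : ℕ) (i : ℕ) : ℕ :=
  if (i : ZMod (p * q)) ∈ DHD1 p q g x ∪ DHP p q then 1 else 0

/-- Second Ding–Helleseth sequence: `s_i = 1` iff `i mod N ∈ D₁ ∪ Q`. -/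
def DHs2 (p q g x : ℕ) (i : ℕ) : ℕ :=
  if (i : ZMod (p * q)) ∈ DHD1 p q g x ∪ DHQ p q then 1 else 0

/-- Circulant matrix of the first sequence: `a_{i,j} = s_{(i-j) mod N}`. -/
noncomputable def DHA1 (p q g x : ℕ) : Matrix (Fin (p * q)) (Fin (p * q)) ℂ :=
  fun i j => (DHs1 p q g x ((((i : ℕ) : ZMod (p * q)) - ((j : ℕ) : ZMod (p * q))).val) : ℂ)

/-- Circulant matrix of the second sequence: `a_{i,j} = s_{(i-j) mod N}`. -/
noncomputable def DHA2 (p q g x : ℕ) : Matrix (Fin (p * q)) (Fin (p * q)) ℂ :=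
  fun i j => (DHs2 p q g x ((((i : ℕ) : ZMod (p * q)) - ((j : ℕ) : ZMod (p * q))).val) : ℂ)

/-- `S(z) = Σ_{i=0}^{N-1} s_i z^i` for the first sequence. -/
noncomputable def DHSval1 (p q g x : ℕ) (z : ℂ) : ℂ :=
  ∑ i ∈ Finset.range (p * q), (DHs1 p q g x i : ℂ) * z ^ i

/-- `S(z) = Σ_{i=0}^{N-1} s_i z^i` for the second sequence. -/
noncomputable def DHSval2 (p q g x : ℕ) (z : ℂ) : ℂ :=
  ∑ i ∈ Finset.range (p * q), (DHs2 p q g x i : ℂ) * z ^ i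

/-- `S(2) = Σ_{i=0}^{N-1} s_i 2^i` for the first sequence, as a natural number. -/
def DHS2num1 (p q g x : ℕ) : ℕ := ∑ i ∈ Finset.range (p * q), DHs1 p q g x i * 2 ^ i

/-- `S(2) = Σ_{i=0}^{N-1} s_i 2^i` for the second sequence, as a natural number. -/
def DHS2num2 (p q g x : ℕ) : ℕ := ∑ i ∈ Finset.range (p * q), DHs2 p q g x i * 2 ^ i

/-- Nonzero quadratic residues modulo `q`. -/
def DHQR (q : ℕ) [NeZero q] : Finset (ZMod q) :=
  Finset.univ.filter (fun a => a ≠ 0 ∧ ∃ b : ZMod q, b * b = a)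

/-- Quadratic nonresidues modulo `q`. -/
def DHQNR (q : ℕ) [NeZero q] : Finset (ZMod q) :=
  Finset.univ.filter (fun a => a ≠ 0 ∧ ¬∃ b : ZMod q, b * b = a)

/-!
Write `a = mq ∈ Q`, so that `z = ξ_N^a` is a primitive `p`-th root of unity and `z^c` depends
only on `c mod p`. On `Q` the residues `kq mod p` run over the nonzero classes once, contributing
`-1`. Reducing the parametrisation `g^(2t+1) x^i` of `D₁` modulo `p` and `q` shows that it is
injective (here `gcd(p-1, q-1) = 2` enters through the Chinese remainder theorem) and that modulo
`p` it runs through `g^s`, `1 ≤ s ≤ (p-1)(q-1)/2`, i.e. over every nonzero class `(q-1)/2` times,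
contributing `-(q-1)/2`.
-/

theorem modEq_of_pow_eq_pow_of_orderOf_eq {M : Type*} [Monoid M] {g : M} {n a b : ℕ}
    (hg : orderOf g = n) (hn : 0 < n) (h : g ^ a = g ^ b) : a ≡ b [MOD n] :=
  hg ▸ (orderOf_pos_iff.mp (hg ▸ hn)).pow_eq_pow_iff_modEq.mp h

theorem Function.Periodic.sum_range_mul {M : Type*} [AddCommMonoid M] {f : ℕ → M} {n : ℕ}
    (hf : Function.Periodic f n) (k : ℕ) :
    ∑ i ∈ range (n * k), f i = k • ∑ i ∈ range n, f i := by
  induction k with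
  | zero => simp
  | succ k ih =>
    rw [Nat.mul_succ, sum_range_add, ih, succ_nsmul]
    congr 1
    refine sum_congr rfl fun i _ => ?_
    rw [add_comm, mul_comm]
    exact hf.nat_mul k i

theorem sum_product_range_two {M : Type*} [AddCommMonoid M] (f : ℕ → M) (n : ℕ) :
    ∑ ti ∈ range n ×ˢ range 2, f (2 * ti.1 + ti.2) = ∑ s ∈ range (2 * n), f s := by
  refine sum_nbij' (fun ti => 2 * ti.1 + ti.2) (fun s => (s / 2, s % 2)) ?_ ?_ ?_ ?_
    (fun _ _ => rfl) <;> simp only [mem_product, mem_range, Prod.forall, Prod.ext_iff] <;>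
    intros <;> omega

theorem sum_range_orderOf_pow_succ {K M : Type*} [Field K] [Fintype K] [DecidableEq K]
    [AddCommMonoid M] {g : K} (hg : orderOf g = Fintype.card K - 1) (f : K → M) :
    ∑ s ∈ range (orderOf g), f (g ^ (s + 1)) = ∑ u ∈ univ.erase 0, f u := by
  have hpos : 0 < orderOf g := hg ▸ Nat.sub_pos_of_lt Fintype.one_lt_card
  have hg0 : g ≠ 0 := by rintro rfl; simp at hpos
  have hinj : Set.InjOn (fun s => g ^ (s + 1)) (range (orderOf g)) := fun a ha b hb hab =>
    (modEq_of_pow_eq_pow_of_orderOf_eq rfl hpos hab).add_right_cancel' 1 |>.eq_of_lt_of_lt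
      (mem_range.mp ha) (mem_range.mp hb)
  rw [← sum_image hinj]
  congr 1
  refine eq_of_subset_of_card_le (fun u hu => ?_) ?_
  · obtain ⟨s, -, rfl⟩ := mem_image.mp hu
    exact mem_erase.mpr ⟨pow_ne_zero _ hg0, mem_univ _⟩
  · rw [card_image_of_injOn hinj, card_range, card_erase_of_mem (mem_univ _), card_univ, hg]

theorem sum_range_eq_sum_zmod {M : Type*} [AddCommMonoid M] (n : ℕ) [NeZero n] (f : ℕ → M) :
    ∑ i ∈ range n, f i = ∑ c : ZMod n, f c.val := by
  refine sum_nbij' (fun i => (i : ZMod n)) ZMod.val (fun _ _ => mem_univ _)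
    (fun c _ => mem_range.mpr c.val_lt) (fun i hi => ZMod.val_cast_of_lt (mem_range.mp hi))
    (fun c _ => ZMod.natCast_zmod_val c) (fun i hi => ?_)
  rw [ZMod.val_cast_of_lt (mem_range.mp hi)]

theorem IsPrimitiveRoot.sum_Ico_one_pow {R : Type*} [CommRing R] [IsDomain R] {ζ : R} {k : ℕ}
    (hζ : IsPrimitiveRoot ζ k) (hk : 1 < k) : ∑ i ∈ Ico 1 k, ζ ^ i = -1 := by
  have := hζ.geom_sum_eq_zero hk
  rw [range_eq_Ico, sum_eq_sum_Ico_succ_bot (by omega), pow_zero] at this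
  linear_combination this

theorem IsPrimitiveRoot.sum_erase_zero_pow_val {R : Type*} [CommRing R] [IsDomain R] {ζ : R}
    {k : ℕ} [NeZero k] (hζ : IsPrimitiveRoot ζ k) (hk : 1 < k) :
    ∑ u ∈ univ.erase (0 : ZMod k), ζ ^ u.val = -1 := by
  rw [sum_erase_eq_sub (mem_univ _), ← sum_range_eq_sum_zmod k (ζ ^ ·),
    hζ.geom_sum_eq_zero hk, ZMod.val_zero, pow_zero, zero_sub]

theorem pow_val_castHom_of_pow_eq_one {M : Type*} [Monoid M] {z : M} {p n : ℕ} [NeZero n]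
    (hz : z ^ p = 1) (h : p ∣ n) (c : ZMod n) :
    z ^ (ZMod.castHom h (ZMod p) c).val = z ^ c.val := by
  rw [ZMod.castHom_apply, ZMod.cast_eq_val, ZMod.val_natCast, ← pow_eq_pow_mod _ hz]

theorem eq_of_two_mul_add_modEq {a b t t' i i' : ℕ} (hab : a.Coprime b) (ht : t < a * b)
    (ht' : t' < a * b) (hi : i < 2) (hi' : i' < 2) (hpa : 2 * t + i ≡ 2 * t' + i' [MOD 2 * a])
    (hpb : 2 * t ≡ 2 * t' [MOD 2 * b]) : t = t' ∧ i = i' := by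
  have hii : i = i' := by
    have := Nat.ModEq.of_mul_right a hpa
    unfold Nat.ModEq at this
    omega
  subst hii
  have hta : t ≡ t' [MOD a] := Nat.ModEq.mul_left_cancel' two_ne_zero (hpa.add_right_cancel' i)
  have htb : t ≡ t' [MOD b] := Nat.ModEq.mul_left_cancel' two_ne_zero hpb
  exact ⟨((Nat.modEq_and_modEq_iff_modEq_mul hab).mp ⟨hta, htb⟩).eq_of_lt_of_lt ht ht', rfl⟩

def DHparam (p q g x : ℕ) (ti : ℕ × ℕ) : ZMod (p * q) :=
  (g : ZMod (p * q)) ^ (2 * ti.1 + 1) * (x : ZMod (p * q)) ^ ti.2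

theorem DHD1_eq_image (p q g x : ℕ) :
    DHD1 p q g x = (range ((p - 1) * (q - 1) / 4) ×ˢ range 2).image (DHparam p q g x) := by
  rw [DHD1, DHD0, image_image]
  congr 1
  funext ti
  simp only [Function.comp, DHparam]
  ring

section DingHelleseth

variable {p q g x : ℕ}

theorem castHom_DHparam_left (hxp : (x : ZMod p) = g) (ti : ℕ × ℕ) :
    ZMod.castHom (dvd_mul_right p q) (ZMod p) (DHparam p q g x ti)
      = (g : ZMod p) ^ (2 * ti.1 + ti.2 + 1) := by
  simp only [DHparam, map_mul, map_pow, map_natCast, hxp, ← pow_add]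
  ring_nf

theorem castHom_DHparam_right (hxq : (x : ZMod q) = 1) (ti : ℕ × ℕ) :
    ZMod.castHom (dvd_mul_left q p) (ZMod q) (DHparam p q g x ti)
      = (g : ZMod q) ^ (2 * ti.1 + 1) := by
  simp [DHparam, hxq]

theorem injOn_DHparam (hp : p.Prime) (hq : q.Prime) (hgcd : Nat.gcd (p - 1) (q - 1) = 2)
    (hgp : orderOf (g : ZMod p) = p - 1) (hgq : orderOf (g : ZMod q) = q - 1)
    (hxp : (x : ZMod p) = g) (hxq : (x : ZMod q) = 1) :
    Set.InjOn (DHparam p q g x) ↑(range ((p - 1) * (q - 1) / 4) ×ˢ range 2) := by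
  obtain ⟨a, ha⟩ : 2 ∣ p - 1 := hgcd ▸ Nat.gcd_dvd_left _ _
  obtain ⟨b, hb⟩ : 2 ∣ q - 1 := hgcd ▸ Nat.gcd_dvd_right _ _
  have hab : a.Coprime b := by
    rw [ha, hb, Nat.gcd_mul_left] at hgcd
    unfold Nat.Coprime
    omega
  have hquarter : (p - 1) * (q - 1) / 4 = a * b := by
    rw [ha, hb]
    exact Nat.div_eq_of_eq_mul_left four_pos (by ring)
  rintro ⟨t, i⟩ hti ⟨t', i'⟩ hti' heq
  simp only [coe_product, coe_range, Set.mem_prod, Set.mem_Iio, hquarter] at hti hti'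
  have hmodp : 2 * t + i + 1 ≡ 2 * t' + i' + 1 [MOD 2 * a] := by
    have := congrArg (ZMod.castHom (dvd_mul_right p q) (ZMod p)) heq
    rw [castHom_DHparam_left hxp, castHom_DHparam_left hxp] at this
    exact modEq_of_pow_eq_pow_of_orderOf_eq (hgp.trans ha) (by have := hp.two_le; omega) this
  have hmodq : 2 * t + 1 ≡ 2 * t' + 1 [MOD 2 * b] := by
    have := congrArg (ZMod.castHom (dvd_mul_left q p) (ZMod q)) heq
    rw [castHom_DHparam_right hxq, castHom_DHparam_right hxq] at this
    exact modEq_of_pow_eq_pow_of_orderOf_eq (hgq.trans hb) (by have := hq.two_le; omega) this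
  obtain ⟨rfl, rfl⟩ := eq_of_two_mul_add_modEq hab hti.1 hti'.1 hti.2 hti'.2
    (hmodp.add_right_cancel' 1) (hmodq.add_right_cancel' 1)
  rfl

theorem disjoint_DHD1_DHQ (hq : q.Prime) (hgq : orderOf (g : ZMod q) = q - 1)
    (hxq : (x : ZMod q) = 1) : Disjoint (DHD1 p q g x) (DHQ p q) := by
  have := Fact.mk hq
  have hg0 : (g : ZMod q) ≠ 0 := by
    intro h
    rw [h, orderOf_zero] at hgq
    have := hq.two_le
    omega
  rw [DHD1_eq_image, disjoint_left]
  rintro _ hc hcQ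
  obtain ⟨ti, -, rfl⟩ := mem_image.mp hc
  obtain ⟨k, -, hk⟩ := mem_image.mp hcQ
  have := congrArg (ZMod.castHom (dvd_mul_left q p) (ZMod q)) hk
  rw [castHom_DHparam_right hxq, map_natCast, Nat.cast_mul, ZMod.natCast_self, mul_zero] at this
  exact pow_ne_zero _ hg0 this.symm

theorem sum_DHD1_comp_castHom {M : Type*} [AddCommMonoid M] [hp : Fact p.Prime] (hq : q.Prime)
    (hgcd : Nat.gcd (p - 1) (q - 1) = 2) (hgp : orderOf (g : ZMod p) = p - 1)
    (hgq : orderOf (g : ZMod q) = q - 1) (hxp : (x : ZMod p) = g) (hxq : (x : ZMod q) = 1)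
    (f : ZMod p → M) :
    ∑ c ∈ DHD1 p q g x, f (ZMod.castHom (dvd_mul_right p q) (ZMod p) c)
      = ((q - 1) / 2) • ∑ u ∈ univ.erase 0, f u := by
  obtain ⟨a, ha⟩ : 2 ∣ p - 1 := hgcd ▸ Nat.gcd_dvd_left _ _
  obtain ⟨b, hb⟩ : 2 ∣ q - 1 := hgcd ▸ Nat.gcd_dvd_right _ _
  have hperiodic : Function.Periodic (fun s => f ((g : ZMod p) ^ (s + 1))) (p - 1) := fun s => by
    dsimp only
    rw [add_right_comm, pow_add, ← hgp, pow_orderOf_eq_one, mul_one]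
  rw [DHD1_eq_image, sum_image (injOn_DHparam hp.out hq hgcd hgp hgq hxp hxq)]
  simp_rw [castHom_DHparam_left hxp]
  calc ∑ ti ∈ range ((p - 1) * (q - 1) / 4) ×ˢ range 2,
        f ((g : ZMod p) ^ (2 * ti.1 + ti.2 + 1))
      = ∑ s ∈ range ((p - 1) * b), f ((g : ZMod p) ^ (s + 1)) := by
        rw [sum_product_range_two (fun s => f ((g : ZMod p) ^ (s + 1))), ha, hb,
          Nat.div_eq_of_eq_mul_left four_pos (by ring : 2 * a * (2 * b) = a * b * 4)]
        ring_nf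
    _ = b • ∑ s ∈ range (p - 1), f ((g : ZMod p) ^ (s + 1)) := hperiodic.sum_range_mul b
    _ = ((q - 1) / 2) • ∑ u ∈ univ.erase 0, f u := by
        rw [← hgp, sum_range_orderOf_pow_succ (by rw [hgp, ZMod.card]), hb,
          Nat.mul_div_cancel_left _ two_pos]

theorem sum_DHQ_pow_val {R : Type*} [CommRing R] [IsDomain R] {z : R}
    (hz : IsPrimitiveRoot z p) (hp : 1 < p) (hqp : q.Coprime p) :
    ∑ c ∈ DHQ p q, z ^ c.val = -1 := by
  have hq : 0 < q := Nat.pos_of_ne_zero fun h => by simp [h] at hqp; omega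
  have hval : ∀ k ∈ Icc 1 (p - 1), ((k * q : ℕ) : ZMod (p * q)).val = k * q := fun k hk =>
    ZMod.val_cast_of_lt (Nat.mul_lt_mul_of_pos_right (by simp at hk; omega) hq)
  rw [DHQ, sum_image fun k hk k' hk' h => Nat.eq_of_mul_eq_mul_right hq <| by
    rw [← hval k hk, ← hval k' hk', h]]
  rw [sum_congr rfl fun k hk => by rw [hval k hk, mul_comm, pow_mul],
    ← Ico_add_one_right_eq_Icc, Nat.sub_add_cancel hp.le]
  exact (hz.pow_of_coprime q hqp).sum_Ico_one_pow hp

theorem DHSval2_eq_sum [NeZero (p * q)] (z : ℂ) :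
    DHSval2 p q g x z = ∑ c ∈ DHD1 p q g x ∪ DHQ p q, z ^ c.val := by
  rw [DHSval2, sum_range_eq_sum_zmod (p * q) fun i => (DHs2 p q g x i : ℂ) * z ^ i]
  simp only [DHs2, ZMod.natCast_zmod_val, Nat.cast_ite, Nat.cast_one, Nat.cast_zero, ite_mul,
    one_mul, zero_mul, sum_ite_mem, univ_inter]

theorem isPrimitiveRoot_DHxi_pow_of_mem_DHQ (hp : p.Prime) (hq : 0 < q) {a : ZMod (p * q)}
    (ha : a ∈ DHQ p q) : IsPrimitiveRoot (DHxi (p * q) ^ a.val) p := by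
  obtain ⟨m, hm, rfl⟩ := mem_image.mp ha
  rw [mem_Icc] at hm
  have hpq : 0 < p * q := Nat.mul_pos hp.pos hq
  have hξ : IsPrimitiveRoot (DHxi (p * q)) (p * q) := Complex.isPrimitiveRoot_exp _ hpq.ne'
  rw [ZMod.val_cast_of_lt (Nat.mul_lt_mul_of_pos_right (by omega) hq), mul_comm m q, pow_mul]
  exact (hξ.pow hpq (mul_comm p q)).pow_of_coprime m
    (Nat.coprime_of_lt_prime (by omega) (by omega) hp).symm

end DingHelleseth

theorem stmt13_general (p q g x : ℕ) (hp : Nat.Prime p) (hq : Nat.Prime q)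
    (hpq : p < q)
    (hgcd : Nat.gcd (p - 1) (q - 1) = 2)
    (hgp : orderOf (g : ZMod p) = p - 1) (hgq : orderOf (g : ZMod q) = q - 1)
    (hxp : (x : ZMod p) = (g : ZMod p)) (hxq : (x : ZMod q) = 1) :
    ∀ a ∈ DHQ p q, DHSval2 p q g x (DHxi (p * q) ^ a.val) = -(((q : ℂ) + 1) / 2) := by
  intro a ha
  have := Fact.mk hp
  have : NeZero (p * q) := ⟨(Nat.mul_pos hp.pos hq.pos).ne'⟩
  set z := DHxi (p * q) ^ a.val
  have hz : IsPrimitiveRoot z p := isPrimitiveRoot_DHxi_pow_of_mem_DHQ hp hq.pos ha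
  have hD1 : ∑ c ∈ DHD1 p q g x, z ^ c.val = -(((q - 1) / 2 : ℕ) : ℂ) := by
    simp_rw [← pow_val_castHom_of_pow_eq_one hz.pow_eq_one (dvd_mul_right p q)]
    rw [sum_DHD1_comp_castHom hq hgcd hgp hgq hxp hxq (fun u => z ^ u.val),
      hz.sum_erase_zero_pow_val hp.one_lt, smul_neg, nsmul_one]
  have hQ : ∑ c ∈ DHQ p q, z ^ c.val = -1 :=
    sum_DHQ_pow_val hz hp.one_lt ((Nat.coprime_primes hq hp).mpr hpq.ne')
  obtain ⟨b, hb⟩ : 2 ∣ q - 1 := hgcd ▸ Nat.gcd_dvd_right _ _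
  have hqb : q = 2 * b + 1 := by have := hq.two_le; omega
  rw [DHSval2_eq_sum, sum_union (disjoint_DHD1_DHQ hq hgq hxq), hD1, hQ, hb,
    Nat.mul_div_cancel_left _ two_pos, hqb]
  push_cast
  ring

theorem stmt13 (p q g x : ℕ) (hp : Nat.Prime p) (hq : Nat.Prime q)
    (hpo : Odd p) (hqo : Odd q) (hpq : p < q)
    (hgcd : Nat.gcd (p - 1) (q - 1) = 2)
    (hgp : orderOf (g : ZMod p) = p - 1) (hgq : orderOf (g : ZMod q) = q - 1)
    (hxp : (x : ZMod p) = (g : ZMod p)) (hxq : (x : ZMod q) = 1) :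
    ∀ a ∈ DHQ p q, DHSval2 p q g x (DHxi (p * q) ^ a.val) = -(((q : ℂ) + 1) / 2) :=
  stmt13_general p q g x hp hq hpq hgcd hgp hgq hxp hxq
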